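/- For every integer k ≥ 1, the smooth Fano 2k-polytopes V^{2k}, Ṽ^{2k}, and T^{2k} are pairwise I-equivalent. -/

import Mathlib

/-! ## Basic definitions: lattice polytopes, smooth Fano polytopes,
unimodular equivalence, F- and I-equivalence, primitive collections. -/

/-- A point of `ℝ^n` all of whose coordinates are integers. -/
def IsLatticePoint {n : ℕ} (x : Fin n → ℝ) : Prop := ∀ i, ∃ m : ℤ, x i = (m : ℝ)

/-- The vertex set of a polytope: its extreme points. -/
def vertexSet {n : ℕ} (P : Set (Fin n → ℝ)) : Set (Fin n → ℝ) :=
  Set.extremePoints ℝ P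

/-- A lattice `n`-polytope: the convex hull of finitely many lattice points,
of full dimension `n`. -/
def IsLatticePolytope {n : ℕ} (P : Set (Fin n → ℝ)) : Prop :=
  (∃ S : Finset (Fin n → ℝ), (∀ x ∈ S, IsLatticePoint x) ∧
    P = convexHull ℝ (S : Set (Fin n → ℝ))) ∧
  affineSpan ℝ P = ⊤

/-- A face of `P`: an exposed subset of `P`. -/
def IsFaceOf {n : ℕ} (F P : Set (Fin n → ℝ)) : Prop := IsExposed ℝ P F

/-- A facet of `P`: a face of affine dimension `n - 1`. -/
def IsFacetOf {n : ℕ} (F P : Set (Fin n → ℝ)) : Prop :=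
  IsFaceOf F P ∧ Module.finrank ℝ (vectorSpan ℝ F) + 1 = n

/-- A set `S` of points of `ℝ^n` forms a `ℤ`-basis of `ℤ^n`:
it consists of `n` lattice points whose matrix has determinant `±1`. -/
def IsUnimodularBasis {n : ℕ} (S : Set (Fin n → ℝ)) : Prop :=
  ∃ b : Fin n → (Fin n → ℝ), Function.Injective b ∧ Set.range b = S ∧
    (∀ i, IsLatticePoint (b i)) ∧ |(Matrix.of b).det| = 1

/-- A smooth Fano `n`-polytope: a lattice `n`-polytope with the origin in its
interior such that the vertex set of every facet is a `ℤ`-basis of `ℤ^n`. -/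
def IsSmoothFano {n : ℕ} (P : Set (Fin n → ℝ)) : Prop :=
  IsLatticePolytope P ∧ (0 : Fin n → ℝ) ∈ interior P ∧
    ∀ F : Set (Fin n → ℝ), IsFacetOf F P → IsUnimodularBasis (vertexSet P ∩ F)

/-- Two subsets of `ℝ^n` are unimodularly equivalent if an affine map of `ℝ^n`
mapping `ℤ^n` onto `ℤ^n` maps one onto the other. -/
def UnimodularEquiv {n : ℕ} (Q Q' : Set (Fin n → ℝ)) : Prop :=
  ∃ φ : (Fin n → ℝ) →ᵃ[ℝ] (Fin n → ℝ),
    φ '' {x | IsLatticePoint x} = {x | IsLatticePoint x} ∧ φ '' Q = Q'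

/-- One step of an I-sequence: the vertex set of one polytope is obtained from
the vertex set of the other by adding one new lattice point. -/
def IStep {n : ℕ} (P Q : Set (Fin n → ℝ)) : Prop :=
  (∃ w : Fin n → ℝ, IsLatticePoint w ∧ w ∉ vertexSet P ∧
    vertexSet Q = vertexSet P ∪ {w}) ∨
  (∃ w : Fin n → ℝ, IsLatticePoint w ∧ w ∉ vertexSet Q ∧
    vertexSet P = vertexSet Q ∪ {w})

/-- I-equivalence of smooth Fano `n`-polytopes. -/
def IEquiv {n : ℕ} (P Q : Set (Fin n → ℝ)) : Prop :=
  ∃ (k : ℕ) (c : Fin (k + 1) → Set (Fin n → ℝ)),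
    (∀ i, IsSmoothFano (c i)) ∧
    UnimodularEquiv P (c 0) ∧ UnimodularEquiv Q (c (Fin.last k)) ∧
    ∀ i : Fin k, IStep (c i.castSucc) (c i.succ)

/-- `Q` is the stellar subdivision of `P` at the new vertex `w`: `w` is the sum
of the vertices of a proper face `F` of `P`, and the facets of `Q` containing
`w` are exactly the sets `conv({w} ∪ (V(F') \ {v}))` for `F'` a facet of `P`
containing `F` and `v` a vertex of `F`. -/
def IsStellarSubdivisionAt {n : ℕ} (P Q : Set (Fin n → ℝ)) (w : Fin n → ℝ) : Prop :=
  ∃ F : Set (Fin n → ℝ), IsFaceOf F P ∧ F.Nonempty ∧ F ≠ P ∧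
    w = ∑ᶠ v ∈ vertexSet P ∩ F, v ∧
    {G : Set (Fin n → ℝ) | IsFacetOf G Q ∧ w ∈ G} =
      {G : Set (Fin n → ℝ) | ∃ F' v, IsFacetOf F' P ∧ F ⊆ F' ∧
        v ∈ vertexSet P ∩ F ∧
        G = convexHull ℝ (insert w ((vertexSet P ∩ F') \ {v}))}

/-- One step of an F-sequence: an I-step which moreover is a stellar
subdivision (or its inverse). -/
def FStep {n : ℕ} (P Q : Set (Fin n → ℝ)) : Prop :=
  (∃ w : Fin n → ℝ, IsLatticePoint w ∧ w ∉ vertexSet P ∧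
    vertexSet Q = vertexSet P ∪ {w} ∧ IsStellarSubdivisionAt P Q w) ∨
  (∃ w : Fin n → ℝ, IsLatticePoint w ∧ w ∉ vertexSet Q ∧
    vertexSet P = vertexSet Q ∪ {w} ∧ IsStellarSubdivisionAt Q P w)

/-- F-equivalence of smooth Fano `n`-polytopes. -/
def FEquiv {n : ℕ} (P Q : Set (Fin n → ℝ)) : Prop :=
  ∃ (k : ℕ) (c : Fin (k + 1) → Set (Fin n → ℝ)),
    (∀ i, IsSmoothFano (c i)) ∧
    UnimodularEquiv P (c 0) ∧ UnimodularEquiv Q (c (Fin.last k)) ∧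
    ∀ i : Fin k, FStep (c i.castSucc) (c i.succ)

/-- A smooth Fano polytope is F-isolated if every smooth Fano polytope
F-equivalent to it is unimodularly equivalent to it. -/
def FIsolated {n : ℕ} (P : Set (Fin n → ℝ)) : Prop :=
  ∀ Q : Set (Fin n → ℝ), IsSmoothFano Q → FEquiv Q P → UnimodularEquiv Q P

/-- A smooth Fano polytope is I-isolated if every smooth Fano polytope
I-equivalent to it is unimodularly equivalent to it. -/
def IIsolated {n : ℕ} (P : Set (Fin n → ℝ)) : Prop :=
  ∀ Q : Set (Fin n → ℝ), IsSmoothFano Q → IEquiv Q P → UnimodularEquiv Q P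

/-- A primitive collection of a smooth Fano polytope `P`: a nonempty set `A` of
vertices such that `conv(A)` is not a face of `P` but `conv(A \ {x})` is a face
of `P` for every `x ∈ A`. -/
def IsPrimitiveCollection {n : ℕ} (P A : Set (Fin n → ℝ)) : Prop :=
  A.Nonempty ∧ A ⊆ vertexSet P ∧ ¬ IsFaceOf (convexHull ℝ A) P ∧
    ∀ x ∈ A, IsFaceOf (convexHull ℝ (A \ {x})) P

/-- The standard basis vector `e_i` of `ℝ^n`. -/
def stdBasis {n : ℕ} (i : Fin n) : Fin n → ℝ := fun q => if q = i then 1 else 0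

/-- The polytope `T^n = conv{e_1, …, e_n, -(e_1 + ⋯ + e_n)}`,
corresponding to projective `n`-space. -/
def Tpoly (n : ℕ) : Set (Fin n → ℝ) :=
  convexHull ℝ (Set.range (stdBasis (n := n)) ∪ {fun _ => (-1 : ℝ)})

/-- The polytope `V^m = conv{±e_1, …, ±e_m, ±(e_1 + ⋯ + e_m)}`. -/
def Vpoly (m : ℕ) : Set (Fin m → ℝ) :=
  convexHull ℝ
    (Set.range (stdBasis (n := m)) ∪ Set.range (fun i => -stdBasis (n := m) i) ∪
      {fun _ => (1 : ℝ), fun _ => (-1 : ℝ)})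

/-- The polytope `Ṽ^m = conv{±e_1, …, ±e_m, e_1 + ⋯ + e_m}`. -/
def Vtildepoly (m : ℕ) : Set (Fin m → ℝ) :=
  convexHull ℝ
    (Set.range (stdBasis (n := m)) ∪ Set.range (fun i => -stdBasis (n := m) i) ∪
      {fun _ => (1 : ℝ)})


/-!
The polytopes `V^n`, `Ṽ^n`, `T^n`, and every polytope met along the I-sequences between them, are
spanned by subsets `S` of `{±e_i, ±𝟙}` whose hull contains the origin in its interior.
Every such polytope is smooth Fano when `n` is even: a facet is cut out by a functional `l`
with `l = M > 0` on the facet, so it contains at most one of `±e_j` for each `j` and at most one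
of `±𝟙`, and has at least `n` vertices. If it contains no `±𝟙`, its vertices are
`±e_1, …, ±e_n` (one sign each). Otherwise it cannot contain a `±e_j` for every `j`: since
`l(±𝟙) = ±∑ⱼ l(e_j)`, that would force a sum of `n` signs to be `±1`, impossible for `n` even.
In both cases the vertices form a matrix of determinant `±1`.

Removing vertices one at a time then links `V^n` to `Ṽ^n` (remove `-𝟙`) and to `T^n` (remove `𝟙`,
then `-e_1, …, -e_n`).
-/

open Set Relation

lemma zero_mem_interior_neg {G : Type*} [TopologicalSpace G] [AddGroup G] [ContinuousNeg G]
    {A : Set G} (h : (0 : G) ∈ interior A) : (0 : G) ∈ interior (-A) :=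
  mem_interior.2 ⟨-interior A, neg_subset_neg.2 interior_subset, isOpen_interior.neg,
    by simpa using h⟩

section Convex

variable {E : Type*} [NormedAddCommGroup E] [NormedSpace ℝ E] {S F : Set E}

theorem IsExposed.eq_convexHull_inter (hS : S.Finite) (hF : IsExposed ℝ (convexHull ℝ S) F) :
    F = convexHull ℝ (S ∩ F) := by
  refine subset_antisymm ?_
    (convexHull_min inter_subset_right (hF.convex (convex_convexHull ℝ S)))
  have hext : F.extremePoints ℝ ⊆ S ∩ F := fun x hx =>
    ⟨extremePoints_convexHull_subset (hF.isExtreme.extremePoints_subset_extremePoints hx), hx.1⟩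
  calc F = closure (convexHull ℝ (F.extremePoints ℝ)) :=
        (closure_convexHull_extremePoints (hF.isCompact (hS.isCompact_convexHull ℝ))
          (hF.convex (convex_convexHull ℝ S))).symm
    _ ⊆ closure (convexHull ℝ (S ∩ F)) := closure_mono (convexHull_mono hext)
    _ = convexHull ℝ (S ∩ F) := (hS.subset inter_subset_left).isClosed_convexHull ℝ |>.closure_eq

theorem mem_extremePoints_convexHull_of_lt (hS : S.Finite) (l : StrongDual ℝ E) {x : E}
    (hx : x ∈ S) (hlt : ∀ y ∈ S, y ≠ x → l y < l x) : x ∈ (convexHull ℝ S).extremePoints ℝ := by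
  set F := {y ∈ convexHull ℝ S | ∀ z ∈ convexHull ℝ S, l z ≤ l y}
  have hF : IsExposed ℝ (convexHull ℝ S) F := fun _ => ⟨l, rfl⟩
  have hle : ∀ z ∈ convexHull ℝ S, l z ≤ l x := by
    refine fun z hz => convexHull_min (fun y hy => show l y ≤ l x from ?_)
      (convex_halfSpace_le l.isLinear (l x)) hz
    rcases eq_or_ne y x with rfl | hyx
    exacts [le_rfl, (hlt y hy hyx).le]
  have hSF : S ∩ F = {x} := by
    refine subset_antisymm (fun y ⟨hy, hyF⟩ => by_contra fun hyx => ?_)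
      (singleton_subset_iff.2 ⟨hx, subset_convexHull ℝ S hx, hle⟩)
    exact (hlt y hy hyx).not_ge (hyF.2 x (subset_convexHull ℝ S hx))
  rw [← isExtreme_singleton (𝕜 := ℝ), ← convexHull_singleton (𝕜 := ℝ) x, ← hSF,
    ← hF.eq_convexHull_inter hS]
  exact hF.isExtreme

lemma exists_pos_of_zero_mem_interior {P : Set E} (h0 : (0 : E) ∈ interior P)
    {l : StrongDual ℝ E} (hl : l ≠ 0) : ∃ y ∈ P, 0 < l y := by
  obtain ⟨z, hz⟩ := DFunLike.ne_iff.1 hl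
  set z' := (l z)⁻¹ • z
  have hz' : l z' = 1 := by simpa [z'] using inv_mul_cancel₀ hz
  have hsmall : ∀ᶠ t : ℝ in nhdsWithin 0 (Ioi 0), t • z' ∈ P :=
    nhdsWithin_le_nhds <| (Continuous.tendsto' (continuous_id.smul continuous_const) 0 0
      (zero_smul ℝ z')).eventually (mem_interior_iff_mem_nhds.1 h0)
  obtain ⟨t, htP, ht⟩ := (hsmall.and self_mem_nhdsWithin).exists
  exact ⟨t • z', htP, by simpa [hz'] using ht⟩

end Convex

variable {n : ℕ}

section Facets

variable {S F : Set (Fin n → ℝ)}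

lemma IsFacetOf.nonempty (hn : 2 ≤ n) {P : Set (Fin n → ℝ)} (hF : IsFacetOf F P) :
    F.Nonempty := by
  by_contra hF0
  have := hF.2
  rw [not_nonempty_iff_eq_empty.1 hF0, vectorSpan_empty, finrank_bot] at this
  omega

lemma IsFacetOf.le_ncard_inter (hS : S.Finite) (hF : IsFacetOf F (convexHull ℝ S))
    (hFne : F.Nonempty) : n ≤ (S ∩ F).ncard := by
  have hSF : F = convexHull ℝ (S ∩ F) := hF.1.eq_convexHull_inter hS
  have hne : (S ∩ F).Nonempty := by
    by_contra h
    rw [not_nonempty_iff_eq_empty.1 h, convexHull_empty] at hSF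
    exact hFne.ne_empty hSF
  have hrank := hF.2
  rw [hSF, ← direction_affineSpan, affineSpan_convexHull, direction_affineSpan] at hrank
  have : Fintype ↥(S ∩ F) := (hS.subset inter_subset_left).fintype
  have := hne.to_subtype
  have := finrank_vectorSpan_range_add_one_le ℝ (Subtype.val : ↥(S ∩ F) → Fin n → ℝ)
  rwa [Subtype.range_val, hrank, ← Nat.card_eq_fintype_card, Nat.card_coe_set_eq] at this

lemma IsFacetOf.exists_pos (h0 : (0 : Fin n → ℝ) ∈ interior (convexHull ℝ S))
    (hF : IsFacetOf F (convexHull ℝ S)) (hFne : F.Nonempty) :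
    ∃ (l : StrongDual ℝ (Fin n → ℝ)) (M : ℝ), 0 < M ∧ ∀ w ∈ F, l w = M := by
  obtain ⟨l, hl⟩ := hF.1 hFne
  obtain ⟨x, hx⟩ := hFne
  have hmax : ∀ w ∈ F, ∀ y ∈ convexHull ℝ S, l y ≤ l w := fun w hw => (hl ▸ hw).2
  refine ⟨l, l x, ?_, fun w hw => le_antisymm (hmax x hx w (hl ▸ hw).1) (hmax w hw x (hl ▸ hx).1)⟩
  by_cases hl0 : l = 0
  · exfalso
    have hFP : F = convexHull ℝ S := by
      rw [hl]; ext y; simp [hl0]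
    have := hF.2
    rw [hFP, ← direction_affineSpan, affineSpan_convexHull,
      affineSpan_eq_top_of_nonempty_interior ⟨0, h0⟩, AffineSubspace.direction_top, finrank_top,
      Module.finrank_fin_fun] at this
    omega
  · obtain ⟨y, hyP, hy⟩ := exists_pos_of_zero_mem_interior h0 hl0
    exact hy.trans_le (hmax x hx y hyP)

end Facets

section UnimodularBasis

lemma mul_sum_ite_ne_one (hev : Even n) (p : Fin n → Prop) [DecidablePred p] {c : ℝ}
    (hc : |c| = 1) : c * ∑ j, (if p j then 1 else -1 : ℝ) ≠ 1 := by
  have hcard := Finset.card_filter_add_card_filter_not (s := Finset.univ) p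
  rw [Finset.card_univ, Fintype.card_fin] at hcard
  rw [Finset.sum_ite, Finset.sum_const, Finset.sum_const, nsmul_one, smul_neg, nsmul_one]
  obtain ⟨k, rfl⟩ := hev
  rcases (abs_eq zero_le_one).1 hc with rfl | rfl <;> intro h
  · have : ((Finset.univ.filter p).card : ℝ) = (Finset.univ.filter (¬ p ·)).card + 1 := by
      linarith
    norm_cast at this; omega
  · have : ((Finset.univ.filter (¬ p ·)).card : ℝ) = (Finset.univ.filter p).card + 1 := by
      linarith
    norm_cast at this; omega

lemma abs_det_diagonal_of_abs_eq_one {d : Fin n → ℝ} (hd : ∀ i, |d i| = 1) :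
    |(Matrix.diagonal d).det| = 1 := by
  rw [Matrix.det_diagonal, Finset.abs_prod]
  exact Finset.prod_eq_one fun i _ => hd i

lemma abs_det_updateRow_diagonal_of_abs_eq_one {d : Fin n → ℝ} (hd : ∀ i, |d i| = 1) (j : Fin n)
    {c : ℝ} (hc : |c| = 1) : |(Matrix.updateRow (Matrix.diagonal d) j fun _ => c).det| = 1 := by
  have hrow : (fun _ => c) = ∑ k, (c * d k) • Matrix.diagonal d k := by
    ext q
    simp [Matrix.diagonal_apply, mul_assoc, ← abs_mul_abs_self (d q), hd q]
  rw [hrow, Matrix.det_updateRow_sum, smul_eq_mul, abs_mul, abs_det_diagonal_of_abs_eq_one hd,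
    abs_mul, hc, hd j, one_mul, one_mul]

lemma isUnimodularBasis_of_subset_range {W : Set (Fin n → ℝ)} {b : Fin n → Fin n → ℝ}
    (hlat : ∀ w ∈ W, IsLatticePoint w) (hcard : n ≤ W.ncard) (hWb : W ⊆ range b)
    (hdet : |(Matrix.of b).det| = 1) : IsUnimodularBasis W := by
  have hinj : Function.Injective b := fun i j hij => by_contra fun hne => by
    simp [Matrix.det_zero_of_row_eq (M := Matrix.of b) hne hij] at hdet
  have hW : W = range b := eq_of_subset_of_ncard_le hWb
    (by rwa [ncard_range_of_injective hinj, Nat.card_fin]) (finite_range b)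
  exact ⟨b, hinj, hW.symm, fun i => hlat _ (hW ▸ mem_range_self i), hdet⟩

end UnimodularBasis

section Vverts

lemma stdBasis_eq_single (i : Fin n) : stdBasis i = Pi.single i 1 := by
  ext q
  simp [stdBasis, Pi.single_apply]

def Vverts (n : ℕ) : Set (Fin n → ℝ) :=
  range (stdBasis (n := n)) ∪ range (fun i => -stdBasis (n := n) i) ∪
    {fun _ => (1 : ℝ), fun _ => (-1 : ℝ)}

lemma mem_Vverts {x : Fin n → ℝ} :
    x ∈ Vverts n ↔ (∃ i, x = Pi.single i 1) ∨ (∃ i, x = Pi.single i (-1)) ∨ x = 1 ∨ x = -1 := by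
  simp only [Vverts, stdBasis_eq_single, ← Pi.single_neg, mem_union, mem_range, mem_insert_iff,
    mem_singleton_iff, eq_comm (a := x), or_assoc]
  rfl

lemma Vverts_finite (n : ℕ) : (Vverts n).Finite :=
  ((finite_range _).union (finite_range _)).union (toFinite _)

lemma isLatticePoint_of_mem_Vverts {x : Fin n → ℝ} (hx : x ∈ Vverts n) : IsLatticePoint x := by
  intro q
  rcases mem_Vverts.1 hx with ⟨i, rfl⟩ | ⟨i, rfl⟩ | rfl | rfl
  · exact ⟨(Pi.single i 1 : Fin n → ℤ) q, by by_cases h : q = i <;> simp [h]⟩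
  · exact ⟨(Pi.single i (-1) : Fin n → ℤ) q, by by_cases h : q = i <;> simp [h]⟩
  · exact ⟨1, by simp⟩
  · exact ⟨-1, by simp⟩

lemma exists_dotProduct_lt_of_mem_Vverts (hn : 2 ≤ n) {x : Fin n → ℝ} (hx : x ∈ Vverts n) :
    ∃ c : Fin n → ℝ, ∀ y ∈ Vverts n, y ≠ x → c ⬝ᵥ y < c ⬝ᵥ x := by
  have hn' : (2 : ℝ) ≤ n := by exact_mod_cast hn
  rcases mem_Vverts.1 hx with ⟨i, rfl⟩ | ⟨i, rfl⟩ | rfl | rfl <;>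
    [use (n + 1 : ℝ) • Pi.single i 1 - 1; use 1 - (n + 1 : ℝ) • Pi.single i 1; use 1; use -1] <;>
  · intro y hy hyx
    rcases mem_Vverts.1 hy with ⟨j, rfl⟩ | ⟨j, rfl⟩ | rfl | rfl <;>
      simp [Pi.single_apply] at hyx ⊢ <;> (try split_ifs) <;> simp_all <;> linarith

lemma vertexSet_convexHull_of_subset_Vverts (hn : 2 ≤ n) {S : Set (Fin n → ℝ)}
    (hS : S ⊆ Vverts n) : vertexSet (convexHull ℝ S) = S := by
  refine subset_antisymm extremePoints_convexHull_subset fun x hx => ?_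
  obtain ⟨c, hc⟩ := exists_dotProduct_lt_of_mem_Vverts hn (hS hx)
  exact mem_extremePoints_convexHull_of_lt ((Vverts_finite n).subset hS)
    (dotProductBilin ℝ ℝ c).toContinuousLinearMap hx fun y hy hyx => hc y (hS hy) hyx

lemma eq_single_or_eq_const_of_mem_Vverts (l : (Fin n → ℝ) →ₗ[ℝ] ℝ) {x : Fin n → ℝ}
    (hx : x ∈ Vverts n) (hlx : 0 < l x) :
    (∃ j, x = Pi.single j (if 0 < l (Pi.single j 1) then 1 else -1)) ∨
      x = fun _ => if 0 < l 1 then 1 else -1 := by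
  rcases mem_Vverts.1 hx with ⟨j, rfl⟩ | ⟨j, rfl⟩ | rfl | rfl
  · exact .inl ⟨j, by simp [hlx]⟩
  · have : l (Pi.single j 1) < 0 := by
      rw [Pi.single_neg, map_neg] at hlx; linarith
    exact .inl ⟨j, by simp [this.not_gt]⟩
  · exact .inr (by simp [hlx]; rfl)
  · have : l 1 < 0 := by
      rw [map_neg] at hlx; linarith
    exact .inr (by simp [this.not_gt]; rfl)

lemma apply_const_ne_of_forall_apply_single_eq (hev : Even n) (l : (Fin n → ℝ) →ₗ[ℝ] ℝ)
    (p : Fin n → Prop) [DecidablePred p] {M c : ℝ} (hM : M ≠ 0) (hc : |c| = 1)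
    (hsingle : ∀ j, l (Pi.single j (if p j then 1 else -1)) = M) : l (fun _ => c) ≠ M := by
  set d : Fin n → ℝ := fun j => if p j then 1 else -1
  have hd : ∀ j, l (Pi.single j 1) = d j * M := fun j => by
    have h : d j * l (Pi.single j 1) = M := by
      rw [← hsingle j, ← smul_eq_mul, ← map_smul, ← Pi.single_smul, smul_eq_mul, mul_one]
    have hdd : d j * d j = 1 := by by_cases h : p j <;> simp [d, h]
    rw [← h, ← mul_assoc, hdd, one_mul]
  have hconst : l (fun _ => c) = c * (∑ j, d j) * M := by
    rw [show (fun _ => c) = c • ∑ j, Pi.single j (1 : ℝ) by ext; simp, map_smul, map_sum]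
    simp [hd, Finset.sum_mul, mul_assoc]
  intro h
  refine mul_sum_ite_ne_one hev p hc (mul_right_cancel₀ hM ?_)
  rw [← hconst, h, one_mul]

lemma isUnimodularBasis_of_subset_Vverts (hev : Even n) {W : Set (Fin n → ℝ)}
    (hW : W ⊆ Vverts n) (l : (Fin n → ℝ) →ₗ[ℝ] ℝ) {M : ℝ} (hM : 0 < M)
    (hlW : ∀ w ∈ W, l w = M) (hcard : n ≤ W.ncard) : IsUnimodularBasis W := by
  classical
  set d : Fin n → ℝ := fun j => if 0 < l (Pi.single j 1) then 1 else -1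
  set c : ℝ := if 0 < l 1 then 1 else -1
  have hd : ∀ j, |d j| = 1 := fun j => by by_cases h : 0 < l (Pi.single j 1) <;> simp [d, h]
  have hc : |c| = 1 := by by_cases h : 0 < l 1 <;> simp [c, h]
  have hlat : ∀ w ∈ W, IsLatticePoint w := fun w hw => isLatticePoint_of_mem_Vverts (hW hw)
  have hWsub : ∀ w ∈ W, (∃ j, w = Pi.single j (d j)) ∨ w = fun _ => c := fun w hw =>
    eq_single_or_eq_const_of_mem_Vverts l (hW hw) (hlW w hw ▸ hM)
  by_cases hcW : (fun _ => c) ∈ W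
  · obtain ⟨j₀, hj₀⟩ : ∃ j₀, Pi.single j₀ (d j₀) ∉ W := by
      by_contra! hall
      exact apply_const_ne_of_forall_apply_single_eq hev l _ hM.ne' hc
        (fun j => hlW _ (hall j)) (hlW _ hcW)
    refine isUnimodularBasis_of_subset_range
      (b := fun j => Matrix.updateRow (Matrix.diagonal d) j₀ (fun _ => c) j) hlat hcard
      (fun w hw => ?_) (abs_det_updateRow_diagonal_of_abs_eq_one hd j₀ hc)
    rcases hWsub w hw with ⟨j, rfl⟩ | rfl
    · have hj : j ≠ j₀ := fun h => hj₀ (h ▸ hw)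
      exact ⟨j, (Matrix.updateRow_ne hj).trans (Matrix.row_diagonal d j)⟩
    · exact ⟨j₀, by simp⟩
  · refine isUnimodularBasis_of_subset_range (b := fun j => Matrix.diagonal d j) hlat hcard
      (fun w hw => ?_) (abs_det_diagonal_of_abs_eq_one hd)
    rcases hWsub w hw with ⟨j, rfl⟩ | rfl
    · exact ⟨j, Matrix.row_diagonal d j⟩
    · exact absurd hw hcW

theorem isSmoothFano_convexHull_of_subset_Vverts (hn : 2 ≤ n) (hev : Even n)
    {S : Set (Fin n → ℝ)} (hS : S ⊆ Vverts n)
    (h0 : (0 : Fin n → ℝ) ∈ interior (convexHull ℝ S)) : IsSmoothFano (convexHull ℝ S) := by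
  have hfin : S.Finite := (Vverts_finite n).subset hS
  have hlat : IsLatticePolytope (convexHull ℝ S) :=
    ⟨⟨hfin.toFinset, fun x hx => isLatticePoint_of_mem_Vverts (hS (hfin.mem_toFinset.1 hx)),
      by rw [hfin.coe_toFinset]⟩,
      (affineSpan_convexHull S).trans (affineSpan_eq_top_of_nonempty_interior ⟨0, h0⟩)⟩
  refine ⟨hlat, h0, fun F hF => ?_⟩
  have hFne := hF.nonempty hn
  obtain ⟨l, M, hM, hlM⟩ := hF.exists_pos h0 hFne
  rw [vertexSet_convexHull_of_subset_Vverts hn hS]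
  exact isUnimodularBasis_of_subset_Vverts hev (inter_subset_left.trans hS) l hM
    (fun w hw => hlM w hw.2) (hF.le_ncard_inter hfin hFne)

end Vverts

section Interior

lemma zero_mem_interior_Tpoly (n : ℕ) : (0 : Fin n → ℝ) ∈ interior (Tpoly n) := by
  set r : ℝ := 1 / (2 * n + 2)
  have hr : 0 < r := by positivity
  refine interior_maximal (fun x hx => ?_) Metric.isOpen_ball (Metric.mem_ball_self hr)
  have hxi : ∀ i, |x i| < r := fun i =>
    (Real.norm_eq_abs (x i) ▸ norm_le_pi_norm x i).trans_lt (mem_ball_zero_iff.1 hx)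
  have hsum : ∑ i, x i ≤ n * r := by
    calc ∑ i, x i ≤ ∑ _i : Fin n, r :=
          Finset.sum_le_sum fun i _ => (le_abs_self _).trans (hxi i).le
      _ = n * r := by simp
  -- `x = ∑ᵢ (xᵢ + t) eᵢ + t (-𝟙)`, a convex combination
  set t : ℝ := (1 - ∑ i, x i) / (n + 1)
  have ht : r ≤ t := by
    rw [le_div_iff₀ (by positivity)]
    have : r * (2 * n + 2) = 1 := div_mul_cancel₀ 1 (by positivity)
    nlinarith
  set w : Option (Fin n) → ℝ := fun o => o.elim t fun i => x i + t
  set z : Option (Fin n) → Fin n → ℝ := fun o => o.elim (fun _ => -1) stdBasis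
  have hw : ∑ o, w o = 1 := by
    simp only [w, Fintype.sum_option, Option.elim, Finset.sum_add_distrib]
    simp [t]; field_simp; ring
  have hx : ∑ o, w o • z o = x := by
    ext q
    simp [w, z, Fintype.sum_option, stdBasis_eq_single, Pi.single_apply]
  rw [← hx]
  refine (convex_convexHull ℝ _).sum_mem (fun o _ => ?_) hw (fun o _ => subset_convexHull ℝ _ ?_)
  · cases o with
    | none => exact hr.le.trans ht
    | some i => show 0 ≤ x i + t; linarith [neg_abs_le (x i), hxi i]
  · cases o with
    | none => exact Or.inr rfl
    | some i => exact Or.inl ⟨i, rfl⟩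

lemma zero_mem_interior_Vtildepoly (n : ℕ) : (0 : Fin n → ℝ) ∈ interior (Vtildepoly n) := by
  refine interior_mono ?_ (zero_mem_interior_neg (zero_mem_interior_Tpoly n))
  rw [Tpoly, ← convexHull_neg]
  refine convexHull_mono fun x hx => ?_
  rcases hx with ⟨i, hi⟩ | hx
  · exact Or.inl (Or.inr ⟨i, show -stdBasis i = x by rw [hi, neg_neg]⟩)
  · rw [mem_singleton_iff, neg_eq_iff_eq_neg] at hx
    exact Or.inr (mem_singleton_iff.2 (by rw [hx]; ext; simp))

end Interior

section Distinctness

lemma stdBasis_ne_const (hn : 2 ≤ n) (i : Fin n) (c : ℝ) : stdBasis i ≠ fun _ => c := by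
  have : Nontrivial (Fin n) := Fin.nontrivial_iff_two_le.2 hn
  obtain ⟨j, hj⟩ := exists_ne i
  intro h
  have h1 : (1 : ℝ) = c := by simpa [stdBasis] using congrFun h i
  have h2 : (0 : ℝ) = c := by simpa [stdBasis, hj] using congrFun h j
  linarith

lemma neg_stdBasis_ne_const (hn : 2 ≤ n) (i : Fin n) (c : ℝ) : -stdBasis i ≠ fun _ => c :=
  fun h => stdBasis_ne_const hn i (-c) (by rw [← neg_neg (stdBasis i), h]; rfl)

lemma stdBasis_ne_neg_stdBasis (i j : Fin n) : stdBasis i ≠ -stdBasis j := fun h => by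
  have := congrFun h i
  by_cases hij : i = j <;> norm_num [stdBasis, hij] at this

lemma stdBasis_injective : Function.Injective (stdBasis (n := n)) := fun i j h => by
  simpa [stdBasis] using congrFun h i

lemma const_one_ne_const_neg_one (hn : 1 ≤ n) : (fun _ : Fin n => (1 : ℝ)) ≠ fun _ => -1 :=
  fun h => by norm_num [funext_iff] at h; exact h ⟨0, hn⟩

end Distinctness

section ISequences

def SmoothFanoIStep (P Q : Set (Fin n → ℝ)) : Prop :=
  IsSmoothFano P ∧ IsSmoothFano Q ∧ IStep P Q

instance : Std.Symm (SmoothFanoIStep (n := n)) :=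
  ⟨fun _ _ ⟨hP, hQ, h⟩ => ⟨hQ, hP, h.symm⟩⟩

lemma UnimodularEquiv.refl (P : Set (Fin n → ℝ)) : UnimodularEquiv P P :=
  ⟨AffineMap.id ℝ _, by simp, by simp⟩

lemma IEquiv.of_reflTransGen {P Q : Set (Fin n → ℝ)} (hP : IsSmoothFano P)
    (h : ReflTransGen SmoothFanoIStep P Q) : IEquiv P Q := by
  suffices ∃ (k : ℕ) (c : Fin (k + 1) → Set (Fin n → ℝ)), (∀ i, IsSmoothFano (c i)) ∧
      c 0 = P ∧ c (Fin.last k) = Q ∧ ∀ i : Fin k, IStep (c i.castSucc) (c i.succ) by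
    obtain ⟨k, c, hc, h0, hk, hstep⟩ := this
    exact ⟨k, c, hc, h0 ▸ .refl P, hk ▸ .refl Q, hstep⟩
  induction h with
  | refl => exact ⟨0, fun _ => P, fun _ => hP, rfl, rfl, Fin.elim0⟩
  | @tail Q R _ hQR ih =>
    obtain ⟨k, c, hc, h0, hk, hstep⟩ := ih
    refine ⟨k + 1, Fin.snoc c R,
      Fin.lastCases (by simpa using hQR.2.1) fun i => by simpa using hc i,
      by simpa using h0, by simp, Fin.lastCases ?_ fun i => ?_⟩
    · simpa [Fin.succ_last, hk] using hQR.2.2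
    · rw [Fin.succ_castSucc, Fin.snoc_castSucc, Fin.snoc_castSucc]
      exact hstep i

lemma smoothFanoIStep_insert (hn : 2 ≤ n) (hev : Even n) {S : Set (Fin n → ℝ)} {w : Fin n → ℝ}
    (hS : insert w S ⊆ Vverts n) (hw : w ∉ S)
    (h0 : (0 : Fin n → ℝ) ∈ interior (convexHull ℝ S)) :
    SmoothFanoIStep (convexHull ℝ (insert w S)) (convexHull ℝ S) := by
  have hS' : S ⊆ Vverts n := (subset_insert w S).trans hS
  refine ⟨isSmoothFano_convexHull_of_subset_Vverts hn hev hS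
      (interior_mono (convexHull_mono (subset_insert w S)) h0),
    isSmoothFano_convexHull_of_subset_Vverts hn hev hS' h0,
    .inr ⟨w, isLatticePoint_of_mem_Vverts (hS (mem_insert w S)), ?_, ?_⟩⟩
  · rwa [vertexSet_convexHull_of_subset_Vverts hn hS']
  · rw [vertexSet_convexHull_of_subset_Vverts hn hS, vertexSet_convexHull_of_subset_Vverts hn hS',
      union_singleton]

lemma smoothFanoIStep_Vpoly_Vtildepoly (hn : 2 ≤ n) (hev : Even n) :
    SmoothFanoIStep (Vpoly n) (Vtildepoly n) := by
  have hV : Vverts n = insert (fun _ => -1) (range stdBasis ∪ range (fun i => -stdBasis i) ∪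
      {fun _ => 1}) := by
    ext x; simp only [Vverts, mem_union, mem_insert_iff, mem_singleton_iff]; tauto
  have hstep := smoothFanoIStep_insert hn hev hV.symm.subset ?_ (zero_mem_interior_Vtildepoly n)
  · rwa [← hV] at hstep
  rintro ((⟨j, hj⟩ | ⟨j, hj⟩) | hj)
  · exact stdBasis_ne_const hn j (-1) hj
  · exact neg_stdBasis_ne_const hn j (-1) hj
  · exact const_one_ne_const_neg_one (by omega) hj.symm

/-- Interpolates between the vertices of `T^n` (`A = ∅`) and those of `V^n` other than `𝟙`
(`A = univ`). -/
def Tverts (n : ℕ) (A : Finset (Fin n)) : Set (Fin n → ℝ) :=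
  range stdBasis ∪ {fun _ => -1} ∪ (fun i => -stdBasis i) '' A

lemma Tverts_subset_Vverts (A : Finset (Fin n)) : Tverts n A ⊆ Vverts n := by
  rintro x ((hx | hx) | ⟨i, -, rfl⟩)
  · exact Or.inl (Or.inl hx)
  · exact Or.inr (Or.inr hx)
  · exact Or.inl (Or.inr ⟨i, rfl⟩)

lemma zero_mem_interior_convexHull_Tverts (A : Finset (Fin n)) :
    (0 : Fin n → ℝ) ∈ interior (convexHull ℝ (Tverts n A)) :=
  interior_mono (convexHull_mono subset_union_left) (zero_mem_interior_Tpoly n)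

lemma smoothFanoIStep_Vpoly_Tverts_univ (hn : 2 ≤ n) (hev : Even n) :
    SmoothFanoIStep (Vpoly n) (convexHull ℝ (Tverts n Finset.univ)) := by
  have hV : Vverts n = insert (fun _ => 1) (Tverts n Finset.univ) := by
    ext x; simp only [Vverts, Tverts, Finset.coe_univ, image_univ, mem_union, mem_insert_iff,
      mem_singleton_iff]; tauto
  have hstep := smoothFanoIStep_insert hn hev hV.symm.subset ?_
    (zero_mem_interior_convexHull_Tverts _)
  · rwa [← hV] at hstep
  rintro ((⟨j, hj⟩ | hj) | ⟨j, -, hj⟩)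
  · exact stdBasis_ne_const hn j 1 hj
  · exact const_one_ne_const_neg_one (by omega) hj
  · exact neg_stdBasis_ne_const hn j 1 hj

lemma reflTransGen_Tverts_Tpoly (hn : 2 ≤ n) (hev : Even n) (A : Finset (Fin n)) :
    ReflTransGen SmoothFanoIStep (convexHull ℝ (Tverts n A)) (Tpoly n) := by
  classical
  induction A using Finset.induction_on with
  | empty => simp [Tverts, Tpoly, ReflTransGen.refl]
  | insert a A ha ih =>
    have hA : Tverts n (insert a A) = insert (-stdBasis a) (Tverts n A) := by
      simp only [Tverts, Finset.coe_insert, image_insert_eq, union_insert]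
    refine .head (hA ▸ smoothFanoIStep_insert hn hev (hA ▸ Tverts_subset_Vverts _) ?_
      (zero_mem_interior_convexHull_Tverts A)) ih
    rintro ((⟨j, hj⟩ | hj) | ⟨j, hjA, hj⟩)
    · exact stdBasis_ne_neg_stdBasis j a hj
    · exact neg_stdBasis_ne_const hn a (-1) hj
    · exact ha (stdBasis_injective (neg_inj.1 hj) ▸ hjA)

end ISequences

/-- For every `k ≥ 1`, the smooth Fano `2k`-polytopes `V^{2k}`,
`Ṽ^{2k}` and `T^{2k}` are pairwise I-equivalent. -/
theorem V_Vtilde_T_pairwise_IEquiv (k : ℕ) (hk : 1 ≤ k) :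
    IsSmoothFano (Vpoly (2 * k)) ∧ IsSmoothFano (Vtildepoly (2 * k)) ∧
    IsSmoothFano (Tpoly (2 * k)) ∧
    IEquiv (Vpoly (2 * k)) (Vtildepoly (2 * k)) ∧
    IEquiv (Vpoly (2 * k)) (Tpoly (2 * k)) ∧
    IEquiv (Vtildepoly (2 * k)) (Tpoly (2 * k)) := by
  have hn : 2 ≤ 2 * k := by omega
  have hev : Even (2 * k) := even_two_mul k
  have hVVt := smoothFanoIStep_Vpoly_Vtildepoly hn hev
  have hVT : ReflTransGen SmoothFanoIStep (Vpoly (2 * k)) (Tpoly (2 * k)) :=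
    .head (smoothFanoIStep_Vpoly_Tverts_univ hn hev) (reflTransGen_Tverts_Tpoly hn hev _)
  have hVtT := (ReflTransGen.single (symm hVVt)).trans hVT
  have hT : IsSmoothFano (Tpoly (2 * k)) :=
    isSmoothFano_convexHull_of_subset_Vverts hn hev
      (subset_union_left.trans (Tverts_subset_Vverts ∅)) (zero_mem_interior_Tpoly _)
  exact ⟨hVVt.1, hVVt.2.1, hT, .of_reflTransGen hVVt.1 (.single hVVt),
    .of_reflTransGen hVVt.1 hVT, .of_reflTransGen hVVt.2.1 hVtT⟩
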